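/- Let T ≥ 1 be an integer and γ > 0. Define the two valuation pairs (s_0, b_0) = (1/2 − γ, 1/2 − γ/2) and (s_1, b_1) = (1/2 + γ/2, 1/2 + γ). For each t ∈ {1,…,T} let π_t : (ℝ × ℝ)^{t−1} → ℝ be an arbitrary function (a deterministic full-feedback algorithm), and for each binary vector h ∈ {0,1}^T define recursively the prices p_t(h) = π_t((s_{h_1}, b_{h_1}), …, (s_{h_{t−1}}, b_{h_{t−1}})). Then the average regret over all 2^T binary vectors satisfies 2^{−T} · ∑_{h ∈ {0,1}^T} ∑_{t=1}^T [ (b_{h_t} − s_{h_t}) − 𝟙(s_{h_t} ≤ p_t(h) ≤ b_{h_t})·(b_{h_t} − s_{h_t}) ] ≥ T·γ/4. -/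

import Mathlib

/-!
Hide the round-`t` coin: flipping `h t` is a bijection of `Fin T → Bool` that leaves the price
`p h t` unchanged, because that price only sees the earlier coins. Pairing each `h` with its flip,
the two valuation intervals `[s₀, b₀]` and `[s₁, b₁]` are disjoint, so the common price misses
at least one of them and the pair loses at least `γ / 2`; hence every round costs `γ / 4` on
average.
-/

open Finset Function

noncomputable def gainFromTrade (p s b : ℝ) : ℝ := if s ≤ p ∧ p ≤ b then b - s else 0

noncomputable def regret (p s b : ℝ) : ℝ := b - s - gainFromTrade p s b

theorem le_regret_add_regret_of_lt {s₀ b₀ s₁ b₁ w : ℝ} (hw : 0 ≤ w) (h₀ : w ≤ b₀ - s₀)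
    (h₁ : w ≤ b₁ - s₁) (hdisj : b₀ < s₁) (p : ℝ) :
    w ≤ regret p s₀ b₀ + regret p s₁ b₁ := by
  unfold regret gainFromTrade
  split_ifs <;> linarith

theorem card_mul_le_two_mul_sum_of_involutive {α : Type*} [Fintype α] {σ : α → α}
    (hσ : Involutive σ) (F : α → ℝ) {c : ℝ} (hc : ∀ x, c ≤ F x + F (σ x)) :
    Fintype.card α * c ≤ 2 * ∑ x, F x :=
  calc Fintype.card α * c = ∑ _x, c := by simp
    _ ≤ ∑ x, (F x + F (σ x)) := sum_le_sum fun x _ => hc x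
    _ = 2 * ∑ x, F x := by
      rw [sum_add_distrib, Fintype.sum_bijective σ hσ.bijective (fun x => F (σ x)) F fun _ => rfl]
      ring

theorem involutive_update_not {ι : Type*} [DecidableEq ι] (i : ι) :
    Involutive fun x : ι → Bool => update x i (!x i) := by
  intro x
  ext j
  by_cases hj : j = i
  · subst hj; simp
  · simp [hj]

theorem two_pow_mul_le_two_mul_sum_of_update_not {ι : Type*} [Fintype ι] [DecidableEq ι]
    (i : ι) (R : Bool → ℝ → ℝ) (q : (ι → Bool) → ℝ) (hq : ∀ x, q (update x i (!x i)) = q x)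
    {c : ℝ} (hc : ∀ p, c ≤ R false p + R true p) :
    2 ^ Fintype.card ι * c ≤ 2 * ∑ x, R (x i) (q x) := by
  have hcard : (Fintype.card (ι → Bool) : ℝ) = 2 ^ Fintype.card ι := by simp
  rw [← hcard]
  refine card_mul_le_two_mul_sum_of_involutive (involutive_update_not i) _ fun x => ?_
  simp only [update_self, hq]
  cases x i
  · exact hc (q x)
  · simpa [add_comm] using hc (q x)

theorem stmt_1_general (T : ℕ) (γ : ℝ) (hγ : 0 < γ)
    (π : (t : ℕ) → (Fin t → ℝ × ℝ) → ℝ) :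
    let sv : Bool → ℝ := fun h => if h then 1 / 2 + γ / 2 else 1 / 2 - γ
    let bv : Bool → ℝ := fun h => if h then 1 / 2 + γ else 1 / 2 - γ / 2
    let p : (Fin T → Bool) → Fin T → ℝ := fun h t =>
      π t (fun i => (sv (h ⟨i.1, i.2.trans t.2⟩), bv (h ⟨i.1, i.2.trans t.2⟩)))
    (T : ℝ) * γ / 4 ≤
      (1 / 2 ^ T) * ∑ h : Fin T → Bool, ∑ t : Fin T,
        ((bv (h t) - sv (h t)) -
          (if sv (h t) ≤ p h t ∧ p h t ≤ bv (h t) then bv (h t) - sv (h t) else 0)) := by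
  intro sv bv p
  have hpair : ∀ q, γ / 2 ≤ regret q (sv false) (bv false) + regret q (sv true) (bv true) :=
    le_regret_add_regret_of_lt (by positivity) (by simp only [sv, bv]; norm_num; linarith)
      (by simp only [sv, bv]; norm_num; linarith) (by simp only [sv, bv]; norm_num; linarith)
  have hround (t : Fin T) :
      2 ^ T * (γ / 2) ≤ 2 * ∑ h : Fin T → Bool, regret (p h t) (sv (h t)) (bv (h t)) := by
    have hblind (h : Fin T → Bool) : p (update h t (!h t)) t = p h t := by
      have hlt (i : Fin t) : (⟨i.1, i.2.trans t.2⟩ : Fin T) ≠ t := Fin.ne_of_lt i.2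
      simp only [p, update_of_ne (hlt _)]
    simpa using two_pow_mul_le_two_mul_sum_of_update_not t
      (fun b q => regret q (sv b) (bv b)) (p · t) hblind hpair
  have hsum : ∑ _t : Fin T, 2 ^ T * (γ / 4) ≤
      ∑ t : Fin T, ∑ h : Fin T → Bool, regret (p h t) (sv (h t)) (bv (h t)) :=
    sum_le_sum fun t _ => by linarith [hround t]
  rw [sum_comm, one_div_mul_eq_div, le_div_iff₀ (by positivity)]
  calc (T : ℝ) * γ / 4 * 2 ^ T
      = ∑ _t : Fin T, 2 ^ T * (γ / 4) := by
        rw [sum_const, card_univ, Fintype.card_fin, nsmul_eq_mul]; ring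
    _ ≤ _ := hsum

/-- core of the Yao's-minimax lower-bound argument.
Rounds are indexed by `Fin T`; `π t` is a deterministic full-feedback algorithm,
mapping the `t` past valuation pairs to a price.  Averaged uniformly over all `2^T`
binary vectors `h : Fin T → Bool`, the cumulative regret is at least `T·γ/4`. -/
theorem stmt_1 (T : ℕ) (hT : 1 ≤ T) (γ : ℝ) (hγ : 0 < γ)
    (π : (t : ℕ) → (Fin t → ℝ × ℝ) → ℝ) :
    let sv : Bool → ℝ := fun h => if h then 1 / 2 + γ / 2 else 1 / 2 - γ
    let bv : Bool → ℝ := fun h => if h then 1 / 2 + γ else 1 / 2 - γ / 2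
    let p : (Fin T → Bool) → Fin T → ℝ := fun h t =>
      π t (fun i => (sv (h ⟨i.1, i.2.trans t.2⟩), bv (h ⟨i.1, i.2.trans t.2⟩)))
    (T : ℝ) * γ / 4 ≤
      (1 / 2 ^ T) * ∑ h : Fin T → Bool, ∑ t : Fin T,
        ((bv (h t) - sv (h t)) -
          (if sv (h t) ≤ p h t ∧ p h t ≤ bv (h t) then bv (h t) - sv (h t) else 0)) :=
  stmt_1_general T γ hγ π
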